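/- arXiv:1102.5682 — 3 statements merged into one kernel-verified Lean document; each statement's English description precedes it below -/
import Mathlib

section
/- Let M = (Q, Σ, δ, q0, F) be a DFA with total transition function over a nonempty finite alphabet Σ, and let q, p ∈ Q. Then d(q, p) = 0 if L_M(q) = L_M(p), and otherwise d(q, p) = 1 + max{d(δ(q, a), δ(p, a)) : a ∈ Σ} (with 1 + ∞ = ∞). -/
/-- The distance `d(L, L')` between two languages: the least `ℓ ∈ ℕ` such that
`L` and `L'` agree on all words of length at least `ℓ` (with `min ∅ = ∞`). -/
noncomputable def langDist {α : Type} (L L' : Set (List α)) : ℕ∞ :=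
  sInf {n : ℕ∞ | ∃ ℓ : ℕ, n = (ℓ : ℕ∞) ∧
    ∀ w : List α, ℓ ≤ w.length → (w ∈ L ↔ w ∈ L')}

/-- The right-language `L_M(q)` of a state `q` of a (total) DFA `M`. -/
def rightLang {α σ : Type} (M : DFA α σ) (q : σ) : Set (List α) :=
  {w | M.evalFrom q w ∈ M.accept}

/-- The distance between two states of a (total) DFA. -/
noncomputable def stateDist {α σ : Type} (M : DFA α σ) (q p : σ) : ℕ∞ :=
  langDist (rightLang M q) (rightLang M p)

/-!
Words of length at least `ℓ + 1` are exactly the words `a :: w` with `|w| ≥ ℓ`, so `L` and `L'`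
agree from length `ℓ + 1` on iff every pair of left quotients `a⁻¹L`, `a⁻¹L'` agrees from length
`ℓ` on. Hence `d(L, L') ≤ ℓ + 1 ↔ max_a d(a⁻¹L, a⁻¹L') ≤ ℓ` for all `ℓ`, and as `d(L, L') = 0`
only when `L = L'`, this pins down `d(L, L') = 1 + max_a d(a⁻¹L, a⁻¹L')` for `L ≠ L'`.
The right-language of `δ(q, a)` is the left quotient of that of `q` by `a`.
-/

theorem ENat.eq_one_add_of_forall_le_succ_iff {x y : ℕ∞} (hx : x ≠ 0)
    (h : ∀ n : ℕ, x ≤ (n + 1 : ℕ) ↔ y ≤ n) : x = 1 + y := by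
  refine eq_of_forall_ge_iff fun c => ?_
  induction c using ENat.recTopCoe with
  | top => simp
  | coe n =>
    cases n with
    | zero => simp [hx]
    | succ k =>
      rw [h k, add_comm, Nat.cast_add, Nat.cast_one]
      exact (ENat.add_le_add_iff_right ENat.one_ne_top).symm

section LanguageDistance

variable {α : Type}

def leftQuotient (a : α) (L : Set (List α)) : Set (List α) :=
  {w | a :: w ∈ L}

theorem langDist_le_natCast_iff (L L' : Set (List α)) (ℓ : ℕ) :
    langDist L L' ≤ ℓ ↔ ∀ w : List α, ℓ ≤ w.length → (w ∈ L ↔ w ∈ L') := by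
  refine ⟨fun h => ?_, fun h => sInf_le ⟨ℓ, rfl, h⟩⟩
  obtain ⟨_, ⟨m, rfl, hm⟩, hlt⟩ :=
    sInf_lt_iff.mp (h.trans_lt (ENat.natCast_lt_natCast.mpr ℓ.lt_succ_self))
  have hmℓ : m ≤ ℓ := Nat.lt_succ_iff.mp (ENat.natCast_lt_natCast.mp hlt)
  exact fun w hw => hm w (hmℓ.trans hw)

theorem langDist_eq_zero_iff {L L' : Set (List α)} : langDist L L' = 0 ↔ L = L' := by
  rw [← nonpos_iff_eq_zero, ← Nat.cast_zero, langDist_le_natCast_iff, Set.ext_iff]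
  simp only [zero_le, true_imp_iff]

theorem langDist_le_succ_iff (L L' : Set (List α)) (ℓ : ℕ) :
    langDist L L' ≤ (ℓ + 1 : ℕ) ↔
      ∀ a, langDist (leftQuotient a L) (leftQuotient a L') ≤ ℓ := by
  simp only [langDist_le_natCast_iff]
  constructor
  · intro h a w hw
    exact h (a :: w) (Nat.succ_le_succ hw)
  · rintro h (_ | ⟨a, w⟩) hw
    · exact absurd hw (Nat.not_succ_le_zero ℓ)
    · exact h a w (Nat.le_of_succ_le_succ hw)

theorem langDist_eq_one_add_iSup_leftQuotient {L L' : Set (List α)} (hL : L ≠ L') :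
    langDist L L' = 1 + ⨆ a, langDist (leftQuotient a L) (leftQuotient a L') :=
  ENat.eq_one_add_of_forall_le_succ_iff (mt langDist_eq_zero_iff.mp hL) fun ℓ => by
    rw [langDist_le_succ_iff, iSup_le_iff]

end LanguageDistance

theorem rightLang_step {α σ : Type} (M : DFA α σ) (q : σ) (a : α) :
    rightLang M (M.step q a) = leftQuotient a (rightLang M q) :=
  rfl

theorem stateDist_recursion_general {α σ : Type}
    (M : DFA α σ) (q p : σ) :
    (rightLang M q = rightLang M p → stateDist M q p = 0) ∧
    (rightLang M q ≠ rightLang M p →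
      stateDist M q p = 1 + ⨆ a : α, stateDist M (M.step q a) (M.step p a)) := by
  refine ⟨langDist_eq_zero_iff.mpr, fun hne => ?_⟩
  simp only [stateDist, rightLang_step]
  exact langDist_eq_one_add_iSup_leftQuotient hne

/-- The recursive formula for the distance between states of a total DFA over a
nonempty finite alphabet: `d(q, p) = 0` if `q ≡ p`, and otherwise
`d(q, p) = 1 + max {d(δ(q, a), δ(p, a)) : a ∈ Σ}`. -/
theorem stateDist_recursion {α σ : Type} [Fintype α] [Nonempty α]
    (M : DFA α σ) (q p : σ) :
    (rightLang M q = rightLang M p → stateDist M q p = 0) ∧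
    (rightLang M q ≠ rightLang M p →
      stateDist M q p = 1 + ⨆ a : α, stateDist M (M.step q a) (M.step p a)) :=
  stateDist_recursion_general M q p
end

section
/- Let G = (V, E) be a finite undirected graph, with a fixed linear order < on V, in which every vertex is incident to at least one edge, let M be the DFA constructed from G as described, and let c : V → {1,2,3} be a proper 3-colouring of G. Then the DFA c(M) constructed from c as described has exactly 14 states and satisfies |L(M) △ L(c(M))| = |E| · (|V| − 2). -/
/-- The alphabet `Σ = {a, b} ∪ V ∪ E` of the DFA constructed from the graph
`G = (V, E)` (edges are represented as ordered pairs `(v₁, v₂)` with `v₁ < v₂`). -/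
inductive Al (V : Type) (E : Finset (V × V)) : Type where
  | a : Al V E
  | b : Al V E
  | vert : V → Al V E
  | edge : {p : V × V // p ∈ E} → Al V E

/-- The state set `Q = {⊤, ⊥, ∞, ☺, ☹} ∪ V ∪ {☺_j, ◐_j, ☹_j : j ∈ {1,2,3}}`
(the index `j ∈ {1,2,3}` is represented by `Fin 3`, with `0, 1, 2` standing
for `1, 2, 3`). -/
inductive St (V : Type) : Type where
  | top : St V          -- ⊤
  | bot : St V          -- ⊥
  | inf : St V          -- ∞
  | smile : St V        -- ☺
  | frown : St V        -- ☹
  | vert : V → St V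
  | smileJ : Fin 3 → St V   -- ☺_j
  | halfJ : Fin 3 → St V    -- ◐_j
  | frownJ : Fin 3 → St V   -- ☹_j
  deriving DecidableEq

/-- The transition function `δ` of the DFA `M` constructed from the graph. -/
def Mstep {V : Type} [DecidableEq V] {E : Finset (V × V)} : St V → Al V E → St V
  | .top, .vert v => .vert v
  | .inf, .a => .smileJ 0
  | .inf, .b => .frownJ 0
  | .vert v, .edge e =>
      if v = e.val.1 then .smileJ 0
      else if v = e.val.2 then .frownJ 0
      else .halfJ 0
  | .halfJ j, .a => if j = 0 then .halfJ 1 else if j = 1 then .halfJ 2 else .smile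
  | .halfJ j, .b => if j = 2 then .frown else .bot
  | .smileJ j, .a => if j = 0 then .smileJ 1 else if j = 1 then .smileJ 2 else .smile
  | .smileJ j, .b => if j = 2 then .smile else .bot
  | .frownJ j, .a => if j = 0 then .frownJ 1 else if j = 1 then .frownJ 2 else .frown
  | .frownJ j, .b => if j = 2 then .frown else .bot
  | .smile, .b => .inf
  | .frown, .b => .inf
  | _, _ => .bot

/-- The total DFA `M` constructed from the graph `G = (V, E)`, with start state `⊤`
and accepting states `F = {∞, ☺}`. -/
def MD (V : Type) [DecidableEq V] (E : Finset (V × V)) : DFA (Al V E) (St V) where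
  step := Mstep
  start := .top
  accept := {.inf, .smile}

/-- The state set `P = {⊤, ⊥, ∞, ☺, ☹} ∪ {1, 2, 3} ∪ {☺_j, ☹_j : j ∈ {1,2,3}}`
of the DFA `c(M)` (colours and the index `j` are represented by `Fin 3`). -/
inductive StC (V : Type) : Type where
  | top : StC V          -- ⊤
  | bot : StC V          -- ⊥
  | inf : StC V          -- ∞
  | smile : StC V        -- ☺
  | frown : StC V        -- ☹
  | col : Fin 3 → StC V      -- colours 1, 2, 3
  | smileJ : Fin 3 → StC V   -- ☺_j
  | frownJ : Fin 3 → StC V   -- ☹_j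
  deriving DecidableEq, Fintype

/-- The transition function `μ` of the DFA `c(M)` obtained from a proper
3-colouring `c` of the graph. -/
def cMstep {V : Type} [DecidableEq V] {E : Finset (V × V)} (c : V → Fin 3) :
    StC V → Al V E → StC V
  | .top, .vert v => .col (c v)
  | .col i, .edge e => if c e.val.2 = i then .frownJ 0 else .smileJ 0
  | .inf, .a => .smileJ 0
  | .inf, .b => .frownJ 0
  | .smileJ j, .a => if j = 0 then .smileJ 1 else if j = 1 then .smileJ 2 else .smile
  | .smileJ j, .b => if j = 2 then .smile else .bot
  | .frownJ j, .a => if j = 0 then .frownJ 1 else if j = 1 then .frownJ 2 else .frown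
  | .frownJ j, .b => if j = 2 then .frown else .bot
  | .smile, .b => .inf
  | .frown, .b => .inf
  | _, _ => .bot

/-- The DFA `c(M)` obtained from the proper 3-colouring `c`. -/
def cMD (V : Type) [DecidableEq V] (E : Finset (V × V)) (c : V → Fin 3) :
    DFA (Al V E) (StC V) where
  step := cMstep c
  start := .top
  accept := {.inf, .smile}


/-!
`M` and `c(M)` share the states `⊥, ∞, ☺, ☹, ☺_j, ☹_j` and agree on them, so a word is an
error only if it separates the two runs before they meet in a shared state. From `⊤` such a
word must begin with a vertex `v` and an edge `e = {v₁, v₂}`. If `v ∈ e`, properness of `c`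
sends both automata to the same state `☺_1` (for `v = v₁`) or `☹_1` (for `v = v₂`). If `v ∉ e`,
`M` moves to `◐_1` and `c(M)` to `☹_1` or `☺_1` according to whether `c(v₂) = c(v)`, and exactly
one word, `aaa` resp. `aab`, separates the pair. Hence the errors correspond bijectively to the
pairs `(e, v)` with `v ∉ e`, and there are `|E| · (|V| - 2)` of them.
-/

namespace DFA

variable {α σ τ : Type*} (M : DFA α σ) (N : DFA α τ)

def disagreements (p : σ) (q : τ) : Set (List α) :=
  symmDiff (M.acceptsFrom p : Set (List α)) (N.acceptsFrom q)

variable {M N}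

@[simp]
theorem nil_mem_disagreements {p : σ} {q : τ} :
    [] ∈ M.disagreements N p q ↔ Xor (p ∈ M.accept) (q ∈ N.accept) :=
  Iff.rfl

@[simp]
theorem cons_mem_disagreements {p : σ} {q : τ} {a : α} {w : List α} :
    a :: w ∈ M.disagreements N p q ↔ w ∈ M.disagreements N (M.step p a) (N.step q a) :=
  Iff.rfl

theorem disagreements_eq_empty_of_bisim (R : σ → τ → Prop)
    (hstep : ∀ p q, R p q → ∀ a, R (M.step p a) (N.step q a))
    (hacc : ∀ p q, R p q → (p ∈ M.accept ↔ q ∈ N.accept)) {p : σ} {q : τ} (hpq : R p q) :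
    M.disagreements N p q = ∅ := by
  refine Set.eq_empty_of_forall_notMem fun w => ?_
  induction w generalizing p q with
  | nil => simp [hacc p q hpq]
  | cons a w ih => exact cons_mem_disagreements.not.2 (ih (hstep p q hpq a))

end DFA

section Counting

open Finset

theorem Finset.card_filter_ne_and_ne {α : Type*} [Fintype α] [DecidableEq α] {x y : α}
    (hxy : x ≠ y) : #{v | v ≠ x ∧ v ≠ y} = Fintype.card α - 2 := by
  have hcompl : ({v | v ≠ x ∧ v ≠ y} : Finset α) = {x, y}ᶜ := by ext; simp
  rw [hcompl, card_compl, card_pair hxy]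

theorem card_edge_vertex_pairs_not_incident {V : Type} [Fintype V] [DecidableEq V]
    {E : Finset (V × V)} (hE : ∀ e ∈ E, e.1 ≠ e.2) :
    #{x : E × V | x.2 ≠ x.1.1.1 ∧ x.2 ≠ x.1.1.2} = #E * (Fintype.card V - 2) := by
  rw [card_filter, Fintype.sum_prod_type]
  simp_rw [← card_filter]
  simp [card_filter_ne_and_ne (hE _ (Subtype.prop _))]

end Counting

inductive CommonState {V : Type} : St V → StC V → Prop
  | bot : CommonState .bot .bot
  | inf : CommonState .inf .inf
  | smile : CommonState .smile .smile
  | frown : CommonState .frown .frown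
  | smileJ (j : Fin 3) : CommonState (.smileJ j) (.smileJ j)
  | frownJ (j : Fin 3) : CommonState (.frownJ j) (.frownJ j)

attribute [simp] CommonState.bot CommonState.inf CommonState.smile CommonState.frown
  CommonState.smileJ CommonState.frownJ

def errorWord {V : Type} {E : Finset (V × V)} (c : V → Fin 3) (x : E × V) : List (Al V E) :=
  [.vert x.2, .edge x.1, .a, .a, if c x.1.1.2 = c x.2 then .a else .b]

theorem errorWord_injective {V : Type} {E : Finset (V × V)} (c : V → Fin 3) :
    Function.Injective (errorWord (E := E) c) := by
  rintro ⟨e, v⟩ ⟨e', v'⟩ h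
  simp_all [errorWord]

section Disagreements

variable {V : Type} [DecidableEq V] {E : Finset (V × V)} (c : V → Fin 3)

@[simp] theorem MD_step : (MD V E).step = Mstep := rfl
@[simp] theorem MD_accept : (MD V E).accept = {.inf, .smile} := rfl
@[simp] theorem cMD_step : (cMD V E c).step = cMstep c := rfl
@[simp] theorem cMD_accept : (cMD V E c).accept = {.inf, .smile} := rfl

theorem CommonState.step {p : St V} {q : StC V} (h : CommonState p q) (x : Al V E) :
    CommonState (Mstep p x) (cMstep c q x) := by
  cases h <;> cases x <;> simp only [Mstep, cMstep] <;> (try split_ifs) <;> constructor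

theorem disagreements_eq_empty_of_commonState {p : St V} {q : StC V} (h : CommonState p q) :
    (MD V E).disagreements (cMD V E c) p q = ∅ :=
  DFA.disagreements_eq_empty_of_bisim CommonState (fun _ _ h => h.step c)
    (fun _ _ h => by cases h <;> simp) h

@[simp]
theorem notMem_disagreements_of_commonState {p : St V} {q : StC V} (h : CommonState p q)
    (w : List (Al V E)) : w ∉ (MD V E).disagreements (cMD V E c) p q := by
  simp [disagreements_eq_empty_of_commonState c h]

theorem disagreements_smile_frown :
    (MD V E).disagreements (cMD V E c) .smile .frown = {[]} := by
  ext (_ | ⟨_ | _ | _ | _, t⟩) <;> simp [Mstep, cMstep]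

theorem disagreements_frown_smile :
    (MD V E).disagreements (cMD V E c) .frown .smile = {[]} := by
  ext (_ | ⟨_ | _ | _ | _, t⟩) <;> simp [Mstep, cMstep]

theorem disagreements_halfJ_two_smileJ :
    (MD V E).disagreements (cMD V E c) (.halfJ 2) (.smileJ 2) = {[.b]} := by
  ext (_ | ⟨_ | _ | _ | _, t⟩) <;> simp [Mstep, cMstep, disagreements_frown_smile]

theorem disagreements_halfJ_one_smileJ :
    (MD V E).disagreements (cMD V E c) (.halfJ 1) (.smileJ 1) = {[.a, .b]} := by
  ext (_ | ⟨_ | _ | _ | _, t⟩) <;> simp [Mstep, cMstep, disagreements_halfJ_two_smileJ]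

theorem disagreements_halfJ_zero_smileJ :
    (MD V E).disagreements (cMD V E c) (.halfJ 0) (.smileJ 0) = {[.a, .a, .b]} := by
  ext (_ | ⟨_ | _ | _ | _, t⟩) <;> simp [Mstep, cMstep, disagreements_halfJ_one_smileJ]

theorem disagreements_halfJ_two_frownJ :
    (MD V E).disagreements (cMD V E c) (.halfJ 2) (.frownJ 2) = {[.a]} := by
  ext (_ | ⟨_ | _ | _ | _, t⟩) <;> simp [Mstep, cMstep, disagreements_smile_frown]

theorem disagreements_halfJ_one_frownJ :
    (MD V E).disagreements (cMD V E c) (.halfJ 1) (.frownJ 1) = {[.a, .a]} := by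
  ext (_ | ⟨_ | _ | _ | _, t⟩) <;> simp [Mstep, cMstep, disagreements_halfJ_two_frownJ]

theorem disagreements_halfJ_zero_frownJ :
    (MD V E).disagreements (cMD V E c) (.halfJ 0) (.frownJ 0) = {[.a, .a, .a]} := by
  ext (_ | ⟨_ | _ | _ | _, t⟩) <;> simp [Mstep, cMstep, disagreements_halfJ_one_frownJ]

theorem disagreements_step_vert_edge {e : E} (hc : c e.1.1 ≠ c e.1.2) (v : V) :
    (MD V E).disagreements (cMD V E c) (Mstep (.vert v) (.edge e))
        (cMstep c (.col (c v)) (.edge e)) =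
      if v = e.1.1 ∨ v = e.1.2 then ∅ else {[.a, .a, if c e.1.2 = c v then .a else .b]} := by
  simp only [Mstep, cMstep]
  split_ifs <;> simp_all [disagreements_eq_empty_of_commonState c,
    disagreements_halfJ_zero_smileJ, disagreements_halfJ_zero_frownJ]

theorem disagreements_top (hc : ∀ e ∈ E, c e.1 ≠ c e.2) :
    (MD V E).disagreements (cMD V E c) .top .top =
      errorWord c '' {x | x.2 ≠ x.1.1.1 ∧ x.2 ≠ x.1.1.2} := by
  ext (_ | ⟨_ | _ | v | _, _ | ⟨_ | _ | _ | e, t⟩⟩)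
  case cons.vert.cons.edge =>
    have hM : Mstep (E := E) .top (.vert v) = .vert v := rfl
    have hcM : cMstep (E := E) c .top (.vert v) = .col (c v) := rfl
    simp only [DFA.cons_mem_disagreements, MD_step, cMD_step, hM, hcM,
      disagreements_step_vert_edge c (hc e.1 e.2)]
    simp only [Set.mem_image, Set.mem_ofPred_eq, Prod.exists, errorWord, List.cons.injEq,
      Al.vert.injEq, Al.edge.injEq]
    split_ifs <;> grind
  all_goals simp [Mstep, cMstep, errorWord]

end Disagreements

theorem colouring_dfa_card_and_errors_general
    {V : Type} [Fintype V] [LinearOrder V] (E : Finset (V × V))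
    (c : V → Fin 3) (hc : ∀ e ∈ E, c e.1 ≠ c e.2) :
    Fintype.card (StC V) = 14 ∧
    (symmDiff ((MD V E).accepts : Set (List (Al V E)))
        ((cMD V E c).accepts : Set (List (Al V E)))).encard
      = ((E.card * (Fintype.card V - 2) : ℕ) : ℕ∞) := by
  refine ⟨rfl, ?_⟩
  change ((MD V E).disagreements (cMD V E c) .top .top).encard = _
  rw [disagreements_top c hc, (errorWord_injective c).encard_image,
    Set.encard_eq_coe_toFinset_card, Set.toFinset_ofPred,
    card_edge_vertex_pairs_not_incident fun e he h => hc e he (congrArg c h)]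

/-- If `c` is a proper 3-colouring of `G`, then `c(M)` has exactly 14 states and
commits exactly `|E|·(|V|−2)` errors with respect to `M`. -/
theorem colouring_dfa_card_and_errors
    {V : Type} [Fintype V] [LinearOrder V] (E : Finset (V × V))
    (hord : ∀ e ∈ E, e.1 < e.2)
    (hinc : ∀ v : V, ∃ e ∈ E, v = e.1 ∨ v = e.2)
    (c : V → Fin 3) (hc : ∀ e ∈ E, c e.1 ≠ c e.2) :
    Fintype.card (StC V) = 14 ∧
    (symmDiff ((MD V E).accepts : Set (List (Al V E)))
        ((cMD V E c).accepts : Set (List (Al V E)))).encard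
      = ((E.card * (Fintype.card V - 2) : ℕ) : ℕ∞) :=
  colouring_dfa_card_and_errors_general E c hc
end

section
/- Let G = (V, E) be a finite undirected graph, with a fixed linear order < on V, in which every vertex is incident to at least one edge, and let M be the DFA constructed from G as described. Then every DFA N with at most 14 states such that L(M) △ L(N) is finite satisfies |L(M) △ L(N)| ≥ |E| · (|V| − 2). -/
/-!
If `N` has at most 14 states and errs only finitely often, then for every edge `e` and every
vertex `v ∉ e` it must err on some word beginning with `v e`; these prefixes are pairwise
distinct, which gives `|E| · (|V| - 2)` errors.

Suppose `N` never errs after `v e`. In `M` the word `v e` leads to `◐₁`, from which 13 states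
with pairwise different languages are reachable, so `N` has 13 distinct states after `v e`.
If `x` and `y` lead `N` to the same state, the languages of `M` after `x` and after `y` differ
only finitely. But the languages of `⊤` and of `v` differ infinitely from each other and from
those of the 13 states, witnessed by the words `v e a a a (b a a a a)ᵏ`. So `N.start` and the
state after `v` are two further states, and `N` would have 15 states.
-/

open Function

theorem Set.infinite_symmDiff_of_injective {ι β : Type*} [Infinite ι] {s t : Set β} {g : ι → β}
    (hg : Injective g) (hs : ∀ i, g i ∈ s) (ht : ∀ i, g i ∉ t) : (symmDiff s t).Infinite :=
  Set.infinite_of_injective_forall_mem hg fun i => Or.inl ⟨hs i, ht i⟩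

theorem Set.encard_le_encard_of_forall_exists_append {α : Type*} {S D : Set (List α)} (n : ℕ)
    (hlen : ∀ w ∈ S, w.length = n) (hext : ∀ w ∈ S, ∃ r, w ++ r ∈ D) : S.encard ≤ D.encard :=
  calc S.encard ≤ (List.take n '' D).encard := Set.encard_le_encard fun w hw =>
        let ⟨r, hr⟩ := hext w hw; ⟨w ++ r, hr, List.take_left' (hlen w hw)⟩
    _ ≤ D.encard := Set.encard_image_le _ _

theorem Finset.card_mul_sub_two_le_card_sigma_compl_pair {ι V : Type*} [Fintype ι] [Fintype V]
    [DecidableEq V] (ends : ι → V × V) :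
    Fintype.card ι * (Fintype.card V - 2) ≤
      (Finset.univ.sigma fun i => ({(ends i).1, (ends i).2}ᶜ : Finset V)).card := by
  rw [Finset.card_sigma]
  refine Finset.card_nsmul_le_sum _ _ _ fun i _ => ?_
  rw [Finset.card_compl]
  exact Nat.sub_le_sub_left Finset.card_le_two _

namespace Language

variable {α : Type*}

theorem symmDiff_leftQuotient (L L' : Language α) (x : List α) :
    symmDiff (L.leftQuotient x : Set (List α)) (L'.leftQuotient x) =
      (x ++ ·) ⁻¹' symmDiff (L : Set (List α)) L' :=
  rfl

theorem finite_symmDiff_leftQuotient {L L' : Language α}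
    (h : (symmDiff (L : Set (List α)) L').Finite) (x : List α) :
    (symmDiff (L.leftQuotient x : Set (List α)) (L'.leftQuotient x)).Finite := by
  rw [symmDiff_leftQuotient]
  exact h.preimage (List.append_right_injective x).injOn

theorem leftQuotient_eq_of_forall_append_notMem {L L' : Language α} {x : List α}
    (h : ∀ r, x ++ r ∉ symmDiff (L : Set (List α)) L') : L.leftQuotient x = L'.leftQuotient x := by
  refine symmDiff_eq_bot.1 (Set.eq_empty_of_forall_notMem fun r hr => h r ?_)
  rwa [symmDiff_leftQuotient] at hr

end Language

namespace DFA

variable {α σ τ : Type*} (M : DFA α σ) (N : DFA α τ)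

theorem finite_symmDiff_acceptsFrom_of_eval_eq
    (hfin : (symmDiff (M.accepts : Set (List α)) N.accepts).Finite) {x y : List α}
    (h : N.eval x = N.eval y) :
    (symmDiff (M.acceptsFrom (M.eval x) : Set (List α)) (M.acceptsFrom (M.eval y))).Finite := by
  have hN : N.accepts.leftQuotient x = N.accepts.leftQuotient y := by
    rw [Language.leftQuotient_accepts_apply, Language.leftQuotient_accepts_apply, h]
  rw [← Language.leftQuotient_accepts_apply, ← Language.leftQuotient_accepts_apply]
  refine ((Language.finite_symmDiff_leftQuotient hfin x).union
    (Language.finite_symmDiff_leftQuotient hfin y)).subset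
    ((symmDiff_triangle _ (N.accepts.leftQuotient x : Set (List α)) _).trans ?_)
  rw [hN, symmDiff_comm (N.accepts.leftQuotient y : Set (List α))]
  rfl

theorem acceptsFrom_eval_eq_of_eval_eq {x y : List α}
    (hx : ∀ r, x ++ r ∉ symmDiff (M.accepts : Set (List α)) N.accepts)
    (hy : ∀ r, y ++ r ∉ symmDiff (M.accepts : Set (List α)) N.accepts)
    (h : N.eval x = N.eval y) : M.acceptsFrom (M.eval x) = M.acceptsFrom (M.eval y) := by
  rw [← Language.leftQuotient_accepts_apply, ← Language.leftQuotient_accepts_apply,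
    Language.leftQuotient_eq_of_forall_append_notMem hx,
    Language.leftQuotient_eq_of_forall_append_notMem hy,
    Language.leftQuotient_accepts_apply, Language.leftQuotient_accepts_apply, h]

end DFA

namespace MD

variable {V : Type} [DecidableEq V] {E : Finset (V × V)}

theorem evalFrom_bot (x : List (Al V E)) : (MD V E).evalFrom .bot x = .bot := by
  induction x with
  | nil => rfl
  | cons c x ih => cases c <;> exact ih

theorem cons_notMem_acceptsFrom {s : St V} {c : Al V E} (h : Mstep s c = .bot)
    (z : List (Al V E)) : c :: z ∉ (MD V E).acceptsFrom s := by
  change (MD V E).evalFrom (Mstep s c) z ∉ (MD V E).accept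
  rw [h, evalFrom_bot]
  simp [MD]

def loop : ℕ → List (Al V E)
  | 0 => []
  | k + 1 => .b :: .a :: .a :: .a :: .a :: loop k

theorem evalFrom_smile_loop (k : ℕ) : (MD V E).evalFrom .smile (loop k) = .smile := by
  induction k with
  | zero => rfl
  | succ k ih => exact ih

def tail (f : {p : V × V // p ∈ E}) (k : ℕ) : List (Al V E) := .edge f :: .a :: .a :: .a :: loop k

omit [DecidableEq V] in
theorem length_tail (f : {p : V × V // p ∈ E}) (k : ℕ) : (tail f k).length = 4 + 5 * k := by
  induction k with
  | zero => rfl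
  | succ k ih => simp only [tail, loop, List.length_cons] at ih ⊢; omega

omit [DecidableEq V] in
theorem tail_injective (f : {p : V × V // p ∈ E}) : Injective (tail f) := fun k l h => by
  have := congrArg List.length h
  rw [length_tail, length_tail] at this
  omega

theorem tail_mem_acceptsFrom_vert {f : {p : V × V // p ∈ E}} {v : V} (hv1 : v ≠ f.val.1)
    (hv2 : v ≠ f.val.2) (k : ℕ) : tail f k ∈ (MD V E).acceptsFrom (.vert v) := by
  change (MD V E).evalFrom (Mstep (.vert v) (.edge f)) (.a :: .a :: .a :: loop k) ∈
    (MD V E).accept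
  simp only [Mstep, hv1, hv2, if_false]
  change (MD V E).evalFrom .smile (loop k) ∈ (MD V E).accept
  rw [evalFrom_smile_loop]
  simp [MD]

theorem eval_vert_edge {f : {p : V × V // p ∈ E}} {v : V} (hv1 : v ≠ f.val.1)
    (hv2 : v ≠ f.val.2) : (MD V E).eval [.vert v, .edge f] = .halfJ 0 := by
  simp [DFA.eval, DFA.evalFrom, MD, Mstep, hv1, hv2]

/-- The 13 states reachable from `◐₁`: all states other than `⊤` and the vertices. -/
def kernelState : Fin 13 → St V :=
  ![.halfJ 0, .halfJ 1, .halfJ 2, .smile, .frown, .inf,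
    .smileJ 0, .smileJ 1, .smileJ 2, .frownJ 0, .frownJ 1, .frownJ 2, .bot]

def kernelWord : Fin 13 → List (Al V E) :=
  ![[], [.a], [.a, .a], [.a, .a, .a], [.a, .a, .b], [.a, .a, .a, .b],
    [.a, .a, .a, .b, .a], [.a, .a, .a, .b, .a, .a], [.a, .a, .a, .b, .a, .a, .a],
    [.a, .a, .a, .b, .b], [.a, .a, .a, .b, .b, .a], [.a, .a, .a, .b, .b, .a, .a], [.b]]

theorem evalFrom_halfJ_kernelWord (i : Fin 13) :
    (MD V E).evalFrom (.halfJ 0) (kernelWord i) = kernelState i := by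
  fin_cases i <;> rfl

theorem step_kernelState_vert (i : Fin 13) (u : V) :
    Mstep (E := E) (kernelState i) (.vert u) = .bot := by
  fin_cases i <;> rfl

theorem step_kernelState_edge (i : Fin 13) (f : {p : V × V // p ∈ E}) :
    Mstep (E := E) (kernelState i) (.edge f) = .bot := by
  fin_cases i <;> rfl

def isAccept : St V → Bool
  | .inf => true
  | .smile => true
  | _ => false

theorem mem_accept_iff (s : St V) : s ∈ (MD V E).accept ↔ isAccept s = true := by
  cases s <;> simp [MD, isAccept]

def probeWord : Fin 8 → List (Al V E) :=
  ![[], [.a], [.a, .a], [.b], [.a, .b], [.a, .a, .b], [.a, .a, .a], [.a, .a, .a, .b]]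

def signature (E : Finset (V × V)) (s : St V) (p : Fin 8) : Bool :=
  isAccept ((MD V E).evalFrom s (probeWord p))

theorem signature_eq_of_acceptsFrom_eq {s t : St V}
    (h : (MD V E).acceptsFrom s = (MD V E).acceptsFrom t) : signature E s = signature E t := by
  funext p
  have hp : probeWord p ∈ (MD V E).acceptsFrom s ↔ probeWord p ∈ (MD V E).acceptsFrom t := by
    rw [h]
  simp only [DFA.mem_acceptsFrom, mem_accept_iff] at hp
  exact Bool.eq_iff_iff.2 hp

def signatureTable : Fin 13 → Fin 8 → Bool :=
  ![![false, false, false, false, false, false, true,  true ],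
    ![false, false, true,  false, false, true,  false, false],
    ![false, true,  false, false, true,  false, false, false],
    ![true,  false, false, true,  false, false, false, false],
    ![false, false, false, true,  false, false, false, false],
    ![true,  false, false, false, false, false, false, true ],
    ![false, false, false, false, false, true,  true,  true ],
    ![false, false, true,  false, true,  true,  false, false],
    ![false, true,  false, true,  true,  false, false, false],
    ![false, false, false, false, false, false, false, true ],
    ![false, false, false, false, false, true,  false, false],
    ![false, false, false, false, true,  false, false, false],
    ![false, false, false, false, false, false, false, false]]

theorem signature_kernelState (i : Fin 13) : signature E (kernelState i) = signatureTable i := by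
  funext p
  fin_cases i <;> fin_cases p <;> rfl

theorem signatureTable_injective : Injective signatureTable := by decide

theorem acceptsFrom_kernelState_injective :
    Injective fun i => (MD V E).acceptsFrom (kernelState i) := fun i j h => by
  apply signatureTable_injective
  rw [← signature_kernelState (E := E), ← signature_kernelState (E := E)]
  exact signature_eq_of_acceptsFrom_eq h

section Separation

variable {f : {p : V × V // p ∈ E}} {v : V} (hv1 : v ≠ f.val.1) (hv2 : v ≠ f.val.2)
include hv1 hv2

theorem infinite_symmDiff_top_kernelState (i : Fin 13) :
    (symmDiff ((MD V E).acceptsFrom .top : Set (List (Al V E)))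
      ((MD V E).acceptsFrom (kernelState i))).Infinite :=
  Set.infinite_symmDiff_of_injective (List.cons_injective.comp (tail_injective f))
    (g := fun k => .vert v :: tail f k) (tail_mem_acceptsFrom_vert hv1 hv2) fun _ => cons_notMem_acceptsFrom (step_kernelState_vert i v) _

theorem infinite_symmDiff_vert_kernelState (i : Fin 13) :
    (symmDiff ((MD V E).acceptsFrom (.vert v) : Set (List (Al V E)))
      ((MD V E).acceptsFrom (kernelState i))).Infinite :=
  Set.infinite_symmDiff_of_injective (tail_injective f) (tail_mem_acceptsFrom_vert hv1 hv2)
    fun _ => cons_notMem_acceptsFrom (step_kernelState_edge i f) _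

theorem infinite_symmDiff_top_vert :
    (symmDiff ((MD V E).acceptsFrom .top : Set (List (Al V E)))
      ((MD V E).acceptsFrom (.vert v))).Infinite :=
  Set.infinite_symmDiff_of_injective (List.cons_injective.comp (tail_injective f))
    (g := fun k => .vert v :: tail f k) (tail_mem_acceptsFrom_vert hv1 hv2)
    fun _ => cons_notMem_acceptsFrom (c := .vert v) rfl _

end Separation

theorem exists_append_mem_symmDiff_accepts {τ : Type} [Fintype τ] (N : DFA (Al V E) τ)
    (hcard : Fintype.card τ ≤ 14)
    (hfin : (symmDiff ((MD V E).accepts : Set (List (Al V E))) N.accepts).Finite)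
    {f : {p : V × V // p ∈ E}} {v : V} (hv1 : v ≠ f.val.1) (hv2 : v ≠ f.val.2) :
    ∃ r, [.vert v, .edge f] ++ r ∈ symmDiff ((MD V E).accepts : Set (List (Al V E))) N.accepts := by
  classical
  by_contra! hcone
  let s i := N.eval ([.vert v, .edge f] ++ kernelWord i)
  have hM i : (MD V E).eval ([.vert v, .edge f] ++ kernelWord i) = kernelState i := by
    rw [DFA.eval, DFA.evalFrom_of_append, ← DFA.eval, eval_vert_edge hv1 hv2,
      evalFrom_halfJ_kernelWord]
  have hs : Injective s := fun i j h => acceptsFrom_kernelState_injective (E := E) <| by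
    have := DFA.acceptsFrom_eval_eq_of_eval_eq _ N
      (fun r => List.append_assoc _ _ r ▸ hcone _) (fun r => List.append_assoc _ _ r ▸ hcone _) h
    rwa [hM, hM] at this
  have hne {x y} (hxy : (symmDiff ((MD V E).acceptsFrom ((MD V E).eval x) : Set (List (Al V E)))
      ((MD V E).acceptsFrom ((MD V E).eval y))).Infinite) : N.eval x ≠ N.eval y := fun h =>
    hxy (DFA.finite_symmDiff_acceptsFrom_of_eval_eq _ N hfin h)
  have h0 : N.start ∉ Finset.univ.image s := by
    simp only [Finset.mem_image, Finset.mem_univ, true_and, not_exists]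
    intro i hi
    exact hne (x := []) (by rw [hM]; exact infinite_symmDiff_top_kernelState hv1 hv2 i) hi.symm
  have h1 : N.eval [.vert v] ∉ Finset.univ.image s := by
    simp only [Finset.mem_image, Finset.mem_univ, true_and, not_exists]
    intro i hi
    exact hne (by rw [hM]; exact infinite_symmDiff_vert_kernelState hv1 hv2 i) hi.symm
  have h01 : N.start ∉ insert (N.eval [.vert v]) (Finset.univ.image s) :=
    Finset.mem_insert.not.2 (not_or.2 ⟨hne (x := []) (y := [.vert v]) (infinite_symmDiff_top_vert hv1 hv2), h0⟩)
  have := (insert N.start (insert (N.eval [.vert v]) (Finset.univ.image s))).card_le_univ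
  rw [Finset.card_insert_of_notMem h01, Finset.card_insert_of_notMem h1,
    Finset.card_image_of_injective _ hs, Finset.card_univ, Fintype.card_fin] at this
  omega

end MD

theorem errors_lower_bound_general
    {V : Type} [Fintype V] [LinearOrder V] (E : Finset (V × V))
    (τ : Type) [Fintype τ] (N : DFA (Al V E) τ)
    (hcard : Fintype.card τ ≤ 14)
    (hfin : (symmDiff ((MD V E).accepts : Set (List (Al V E)))
        (N.accepts : Set (List (Al V E)))).Finite) :
    ((E.card * (Fintype.card V - 2) : ℕ) : ℕ∞)
      ≤ (symmDiff ((MD V E).accepts : Set (List (Al V E)))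
          (N.accepts : Set (List (Al V E)))).encard := by
  let P := Finset.univ.sigma fun e : {p : V × V // p ∈ E} => ({e.val.1, e.val.2}ᶜ : Finset V)
  let word : (Σ _ : {p : V × V // p ∈ E}, V) → List (Al V E) := fun ev => [.vert ev.2, .edge ev.1]
  have hword : Injective word := fun ⟨e, v⟩ ⟨e', v'⟩ h => by
    simp only [word, List.cons.injEq, Al.vert.injEq, Al.edge.injEq, and_true] at h
    rw [h.1, h.2]
  have hP := Finset.card_mul_sub_two_le_card_sigma_compl_pair (V := V) Subtype.val (ι := E)
  rw [Fintype.card_coe] at hP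
  calc ((E.card * (Fintype.card V - 2) : ℕ) : ℕ∞) ≤ P.card := by exact_mod_cast hP
    _ = (word '' P).encard := by rw [hword.encard_image, Set.encard_coe_eq_coe_finsetCard]
    _ ≤ _ := by
      refine Set.encard_le_encard_of_forall_exists_append 2 (by rintro _ ⟨_, -, rfl⟩; rfl) ?_
      rintro _ ⟨⟨e, v⟩, hev, rfl⟩
      obtain ⟨-, hv⟩ := Finset.mem_sigma.1 hev
      simp only [Finset.mem_compl, Finset.mem_insert, Finset.mem_singleton, not_or] at hv
      exact MD.exists_append_mem_symmDiff_accepts N hcard hfin hv.1 hv.2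

/-- Every DFA `N` with at most 14 states that is hyper-equivalent to `M`
(finite symmetric difference of languages) commits at least `|E|·(|V|−2)` errors. -/
theorem errors_lower_bound
    {V : Type} [Fintype V] [LinearOrder V] (E : Finset (V × V))
    (hord : ∀ e ∈ E, e.1 < e.2)
    (hinc : ∀ v : V, ∃ e ∈ E, v = e.1 ∨ v = e.2)
    (τ : Type) [Fintype τ] (N : DFA (Al V E) τ)
    (hcard : Fintype.card τ ≤ 14)
    (hfin : (symmDiff ((MD V E).accepts : Set (List (Al V E)))
        (N.accepts : Set (List (Al V E)))).Finite) :
    ((E.card * (Fintype.card V - 2) : ℕ) : ℕ∞)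
      ≤ (symmDiff ((MD V E).accepts : Set (List (Al V E)))
          (N.accepts : Set (List (Al V E)))).encard :=
  errors_lower_bound_general E τ N hcard hfin
end
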